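/- arXiv:2001.06128 — 4 statements merged into one kernel-verified Lean document; each statement's English description precedes it below -/
import Mathlib

section
/- The functions Cos and Sinc are strictly decreasing on the interval (-∞, π²]. -/
noncomputable def RCos (ξ : ℝ) : ℝ := ∑' k : ℕ, (-ξ) ^ k / (Nat.factorial (2 * k))

noncomputable def RSinc (ξ : ℝ) : ℝ := ∑' k : ℕ, (-ξ) ^ k / (Nat.factorial (2 * k + 1))

/-!
On `ξ ≤ 0` every term `(-ξ) ^ k / (c k)!` of either series is nonnegative and increasing in `-ξ`,
the linear term strictly so. On `0 ≤ ξ` the series are `cos √ξ` and `sinc √ξ`, and both `cos` and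
`sinc` are strictly decreasing on `[0, π]`; for `sinc` this is the inequality `t cos t < sin t`.
The two halves meet at `ξ = 0`.
-/

open Real Set

section FactorialSeries

variable {c : ℕ → ℕ}

theorem summable_neg_pow_div_factorial (hc : ∀ k, k ≤ c k) (ξ : ℝ) :
    Summable fun k : ℕ => (-ξ) ^ k / (c k).factorial := by
  refine .of_norm_bounded (Real.summable_pow_div_factorial |ξ|) fun k => ?_
  rw [norm_div, norm_pow, norm_neg, Real.norm_eq_abs, RCLike.norm_natCast]
  gcongr
  exact hc k

theorem strictAntiOn_tsum_neg_pow_div_factorial (hc : ∀ k, k ≤ c k) :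
    StrictAntiOn (fun ξ : ℝ => ∑' k : ℕ, (-ξ) ^ k / (c k).factorial) (Iic 0) := by
  intro x _ y hy hxy
  have hy' : 0 ≤ -y := neg_nonneg.2 hy
  refine Summable.tsum_lt_tsum (i := 1) (fun k => ?_) ?_
    (summable_neg_pow_div_factorial hc y) (summable_neg_pow_div_factorial hc x)
  · gcongr
  · have hfac : (0 : ℝ) < (c 1).factorial := by positivity
    simpa using div_lt_div_of_pos_right (neg_lt_neg hxy) hfac

end FactorialSeries

theorem RCos_eq_cos_sqrt {ξ : ℝ} (hξ : 0 ≤ ξ) : RCos ξ = cos √ξ := by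
  rw [Real.cos_eq_tsum, RCos]
  congr 1 with k
  rw [pow_mul, sq_sqrt hξ, neg_pow ξ k, mul_div_assoc]

theorem sqrt_mul_RSinc {ξ : ℝ} (hξ : 0 ≤ ξ) : √ξ * RSinc ξ = sin √ξ := by
  rw [Real.sin_eq_tsum, RSinc, ← tsum_mul_left]
  congr 1 with k
  rw [pow_succ, pow_mul, sq_sqrt hξ, neg_pow ξ k]
  ring

theorem RSinc_eq_sinc_sqrt {ξ : ℝ} (hξ : 0 ≤ ξ) : RSinc ξ = sinc √ξ := by
  rcases hξ.eq_or_lt with rfl | hξ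
  · rw [RSinc, tsum_eq_single 0 fun k hk => by simp [hk]]
    simp
  · have hs : √ξ ≠ 0 := (sqrt_pos.2 hξ).ne'
    rw [sinc_of_ne_zero hs, ← sqrt_mul_RSinc hξ.le, mul_div_cancel_left₀ _ hs]

theorem Real.mul_cos_lt_sin {t : ℝ} (h0 : 0 < t) (hπ : t < π) : t * cos t < sin t := by
  rcases lt_or_ge t (π / 2) with ht | ht
  · have hcos : 0 < cos t := cos_pos_of_mem_Ioo ⟨by linarith [pi_pos], ht⟩
    have := lt_tan h0 ht
    rwa [tan_eq_sin_div_cos, lt_div_iff₀ hcos] at this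
  · have hcos : cos t ≤ 0 := cos_nonpos_of_pi_div_two_le_of_le ht (by linarith [pi_pos])
    have hsin : 0 < sin t := sin_pos_of_pos_of_lt_pi h0 hπ
    nlinarith

theorem Real.strictAntiOn_sinc : StrictAntiOn sinc (Icc 0 π) := by
  refine strictAntiOn_of_deriv_neg (convex_Icc 0 π) continuous_sinc.continuousOn fun t ht => ?_
  rw [interior_Icc] at ht
  have hsinc : sinc =ᶠ[nhds t] sin / id :=
    (lt_mem_nhds ht.1).mono fun x hx => sinc_of_ne_zero hx.ne'
  rw [hsinc.deriv_eq, ((hasDerivAt_sin t).div (hasDerivAt_id t) ht.1.ne').deriv]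
  refine div_neg_of_neg_of_pos ?_ (pow_pos ht.1 2)
  simpa [mul_comm] using mul_cos_lt_sin ht.1 ht.2

theorem StrictAntiOn.comp_sqrt_Icc {f : ℝ → ℝ} {a : ℝ} (ha : 0 ≤ a)
    (hf : StrictAntiOn f (Icc 0 a)) : StrictAntiOn (f ∘ sqrt) (Icc 0 (a ^ 2)) := by
  refine hf.comp_strictMonoOn (strictMonoOn_sqrt.mono Icc_subset_Ici_self) fun x hx => ?_
  exact ⟨sqrt_nonneg x, (sqrt_le_sqrt hx.2).trans_eq (sqrt_sq ha)⟩

theorem StrictAntiOn.Iic_of_Icc {f : ℝ → ℝ} {a : ℝ} (ha : 0 ≤ a)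
    (hneg : StrictAntiOn f (Iic 0)) (hpos : StrictAntiOn f (Icc 0 a)) : StrictAntiOn f (Iic a) := by
  rw [← Iic_union_Icc_eq_Iic ha]
  exact hneg.union hpos isGreatest_Iic (isLeast_Icc ha)

theorem stmt_5 :
    StrictAntiOn RCos (Set.Iic (Real.pi ^ 2)) ∧ StrictAntiOn RSinc (Set.Iic (Real.pi ^ 2)) := by
  have hπ : 0 ≤ π := pi_pos.le
  constructor
  · refine .Iic_of_Icc (by positivity)
      (strictAntiOn_tsum_neg_pow_div_factorial (c := (2 * ·)) fun k => by omega) ?_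
    exact (strictAntiOn_cos.comp_sqrt_Icc hπ).congr fun ξ hξ => (RCos_eq_cos_sqrt hξ.1).symm
  · refine .Iic_of_Icc (by positivity)
      (strictAntiOn_tsum_neg_pow_div_factorial (c := (2 * · + 1)) fun k => by omega) ?_
    exact (strictAntiOn_sinc.comp_sqrt_Icc hπ).congr fun ξ hξ => (RSinc_eq_sinc_sqrt hξ.1).symm
end

section
/- Let O ⊂ ℂ be an open set closed under negation (z ∈ O implies -z ∈ O), let Õ = {z² : z ∈ O}, and let f be a holomorphic function on O with f(-z) = f(z) for all z ∈ O. Then Õ is open and there exists a unique holomorphic function f̃ on Õ such that f(z) = f̃(z²) for all z ∈ O. -/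
/-!
Since `f` is even, `f z` depends only on `z ^ 2`, so `f̃ w := f z` for any square root `z ∈ O`
of `w` is well defined. Squaring is a nonconstant entire map, hence open. Away from `0` its
derivative does not vanish, so near `z ^ 2` the function `f̃` is `f` composed with an
analytic local inverse of squaring. At `0`, `f̃` is continuous (the chosen square roots have
norm `√‖w‖`) and holomorphic on a punctured neighbourhood, so the singularity is removable.
-/

open Filter Topology

open Classical in
noncomputable def sqrtIn (O : Set ℂ) (w : ℂ) : ℂ :=
  if h : ∃ z ∈ O, z ^ 2 = w then h.choose else 0

section SqrtIn

variable {O : Set ℂ} {w : ℂ}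

lemma sqrtIn_mem_and_sq (h : w ∈ (fun z : ℂ => z ^ 2) '' O) :
    sqrtIn O w ∈ O ∧ sqrtIn O w ^ 2 = w := by
  have h' : ∃ z ∈ O, z ^ 2 = w := h
  rw [sqrtIn, dif_pos h']
  exact h'.choose_spec

lemma norm_sqrtIn_le (O : Set ℂ) (w : ℂ) : ‖sqrtIn O w‖ ≤ √‖w‖ := by
  by_cases h : ∃ z ∈ O, z ^ 2 = w
  · rw [Real.le_sqrt (norm_nonneg _) (norm_nonneg _), ← norm_pow, (sqrtIn_mem_and_sq h).2]
  · simp [sqrtIn, h]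

lemma tendsto_sqrtIn_zero (O : Set ℂ) : Tendsto (sqrtIn O) (𝓝 0) (𝓝 0) := by
  rw [tendsto_zero_iff_norm_tendsto_zero]
  refine squeeze_zero (fun _ => norm_nonneg _) (norm_sqrtIn_le O) ?_
  exact continuous_norm.sqrt.tendsto' 0 0 (by simp)

end SqrtIn

lemma isOpenMap_sq_complex : IsOpenMap (fun z : ℂ => z ^ 2) :=
  (analyticOnNhd_id.pow 2).is_constant_or_isOpenMap.resolve_left fun ⟨w, hw⟩ => by
    simpa using (hw 0).trans (hw 1).symm

section EvenFunction

variable {O : Set ℂ} {f : ℂ → ℂ}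

lemma apply_eq_of_sq_eq_sq (heven : ∀ z ∈ O, f (-z) = f z) {z z' : ℂ} (hz : z ∈ O)
    (h : z' ^ 2 = z ^ 2) : f z' = f z := by
  rcases sq_eq_sq_iff_eq_or_eq_neg.1 h with rfl | rfl
  · rfl
  · exact heven z hz

lemma apply_sqrtIn_sq (heven : ∀ z ∈ O, f (-z) = f z) {z : ℂ} (hz : z ∈ O) :
    f (sqrtIn O (z ^ 2)) = f z :=
  apply_eq_of_sq_eq_sq heven hz (sqrtIn_mem_and_sq ⟨z, hz, rfl⟩).2

variable (hO : IsOpen O) (hf : DifferentiableOn ℂ f O) (heven : ∀ z ∈ O, f (-z) = f z)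
include hO hf heven

lemma analyticAt_comp_sqrtIn_of_ne_zero {z : ℂ} (hz : z ∈ O) (hz0 : z ≠ 0) :
    AnalyticAt ℂ (f ∘ sqrtIn O) (z ^ 2) := by
  have hsq : AnalyticAt ℂ (fun z : ℂ => z ^ 2) z := by fun_prop
  have hderiv : deriv (fun z : ℂ => z ^ 2) z ≠ 0 := by simp [hz0]
  refine (analyticAt_comp_iff_of_deriv_ne_zero hsq hderiv).1 ?_
  refine (hf.analyticAt (hO.mem_nhds hz)).congr ?_
  filter_upwards [hO.mem_nhds hz] with z' hz' using (apply_sqrtIn_sq heven hz').symm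

lemma analyticAt_comp_sqrtIn_zero (h0 : (0 : ℂ) ∈ O) : AnalyticAt ℂ (f ∘ sqrtIn O) 0 := by
  have himage : (fun z : ℂ => z ^ 2) '' O ∈ 𝓝 0 := by
    simpa using isOpenMap_sq_complex.image_mem_nhds (hO.mem_nhds h0)
  refine Complex.analyticAt_of_differentiable_on_punctured_nhds_of_continuousAt ?_ ?_
  · filter_upwards [nhdsWithin_le_nhds himage, self_mem_nhdsWithin] with w ⟨z, hz, hzw⟩ hz0
    subst hzw
    exact (analyticAt_comp_sqrtIn_of_ne_zero hO hf heven hz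
      (pow_ne_zero_iff two_ne_zero |>.1 hz0)).differentiableAt
  · have hsqrt0 : sqrtIn O 0 = 0 :=
      pow_eq_zero_iff two_ne_zero |>.1 (sqrtIn_mem_and_sq ⟨0, h0, by simp⟩).2
    rw [ContinuousAt, Function.comp_apply, hsqrt0]
    exact (hf.continuousOn.continuousAt (hO.mem_nhds h0)).tendsto.comp (tendsto_sqrtIn_zero O)

lemma analyticOnNhd_comp_sqrtIn :
    AnalyticOnNhd ℂ (f ∘ sqrtIn O) ((fun z : ℂ => z ^ 2) '' O) := by
  rintro _ ⟨z, hz, rfl⟩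
  rcases eq_or_ne z 0 with rfl | hz0
  · simpa using analyticAt_comp_sqrtIn_zero hO hf heven hz
  · exact analyticAt_comp_sqrtIn_of_ne_zero hO hf heven hz hz0

end EvenFunction

theorem stmt_9_general (O : Set ℂ) (hO : IsOpen O)
    (f : ℂ → ℂ) (hf : DifferentiableOn ℂ f O) (heven : ∀ z ∈ O, f (-z) = f z) :
    IsOpen ((fun z : ℂ => z ^ 2) '' O) ∧
    ∃ ftilde : ℂ → ℂ,
      (DifferentiableOn ℂ ftilde ((fun z : ℂ => z ^ 2) '' O) ∧
        ∀ z ∈ O, f z = ftilde (z ^ 2)) ∧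
      ∀ g : ℂ → ℂ,
        (DifferentiableOn ℂ g ((fun z : ℂ => z ^ 2) '' O) ∧ ∀ z ∈ O, f z = g (z ^ 2)) →
        Set.EqOn g ftilde ((fun z : ℂ => z ^ 2) '' O) := by
  have hlift : ∀ z ∈ O, f z = (f ∘ sqrtIn O) (z ^ 2) := fun z hz =>
    (apply_sqrtIn_sq heven hz).symm
  refine ⟨isOpenMap_sq_complex O hO, f ∘ sqrtIn O,
    ⟨(analyticOnNhd_comp_sqrtIn hO hf heven).differentiableOn, hlift⟩, ?_⟩
  rintro g ⟨-, hg⟩ _ ⟨z, hz, rfl⟩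
  exact (hg z hz).symm.trans (hlift z hz)

theorem stmt_9 (O : Set ℂ) (hO : IsOpen O) (hsym : ∀ z ∈ O, -z ∈ O)
    (f : ℂ → ℂ) (hf : DifferentiableOn ℂ f O) (heven : ∀ z ∈ O, f (-z) = f z) :
    IsOpen ((fun z : ℂ => z ^ 2) '' O) ∧
    ∃ ftilde : ℂ → ℂ,
      (DifferentiableOn ℂ ftilde ((fun z : ℂ => z ^ 2) '' O) ∧
        ∀ z ∈ O, f z = ftilde (z ^ 2)) ∧
      ∀ g : ℂ → ℂ,
        (DifferentiableOn ℂ g ((fun z : ℂ => z ^ 2) '' O) ∧ ∀ z ∈ O, f z = g (z ^ 2)) →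
        Set.EqOn g ftilde ((fun z : ℂ => z ^ 2) '' O) :=
  stmt_9_general O hO f hf heven
end

section
/- Let κ = κ' + iκ'' be a nonzero complex number with |κ'| < 1, and let f(r) = c₁ r^{1/2+κ} + c₂ r^{1/2-κ} for r > 0 with (c₁,c₂) ≠ (0,0). Then f is not square-integrable on (0,∞), i.e., ∫₀^∞ |f(r)|² dr = ∞. -/
/-!
Write `|f(r)|² = r ‖c₁ r^κ + c₂ r^(-κ)‖²`. A single nonzero term gives a constant multiple of a
power of `r`, and no power is integrable on `(0, ∞)`. If `Re κ ≠ 0`, the symmetry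
`(κ, c₁, c₂) ↦ (-κ, c₂, c₁)` lets us assume `Re κ > 0` and `c₁ ≠ 0`; then `|f|² → ∞`.
If `κ` is purely imaginary, pick `a > 0` with `a^κ = i`: with `u = c₁ r^κ`, `v = c₂ r^(-κ)` the
values at `r` and `a r` are `r ‖u + v‖²` and `a r ‖u - v‖²`, and `‖u‖ = ‖c₁‖`, `‖v‖ = ‖c₂‖`, so by
the parallelogram law `|f(r)|² + a⁻¹ |f(a r)|² = 2 (‖c₁‖² + ‖c₂‖²) r`, which is not integrable.
-/

open MeasureTheory Set Filter Complex

theorem not_integrableOn_Ioi_of_tendsto_atTop {F : ℝ → ℝ} (a : ℝ)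
    (hF : Tendsto F atTop atTop) : ¬ IntegrableOn F (Ioi a) := by
  intro hI
  obtain ⟨R, hR⟩ := eventually_atTop.mp (hF.eventually_ge_atTop 1)
  have hsub : Ioi (max a R) ⊆ {x | 1 ≤ F x} := fun x hx => hR x ((le_max_right a R).trans hx.le)
  have htop : volume.restrict (Ioi a) (Ioi (max a R)) = ⊤ := by
    rw [Measure.restrict_apply measurableSet_Ioi,
      inter_eq_left.mpr (Ioi_subset_Ioi (le_max_left a R)), Real.volume_Ioi]
  exact (htop ▸ (measure_mono hsub).trans_lt (hI.measure_ge_lt_top one_pos)).ne rfl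

theorem norm_ofReal_cpow_of_re_eq_zero {κ : ℂ} (hκ : κ.re = 0) {r : ℝ} (hr : 0 < r) :
    ‖(r : ℂ) ^ κ‖ = 1 := by
  rw [norm_cpow_eq_rpow_re_of_pos hr, hκ, Real.rpow_zero]

theorem exists_ofReal_cpow_eq_I {κ : ℂ} (hre : κ.re = 0) (him : κ.im ≠ 0) :
    ∃ a : ℝ, 0 < a ∧ (a : ℂ) ^ κ = I := by
  set s : ℝ := Real.pi / (2 * κ.im)
  refine ⟨Real.exp s, Real.exp_pos s, ?_⟩
  have hκI : κ = κ.im * I := by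
    conv_lhs => rw [← re_add_im κ, hre]
    simp
  have hs : s * κ = Real.pi / 2 * I := by
    have : (κ.im : ℂ) ≠ 0 := by exact_mod_cast him
    rw [hκI]
    simp only [s]
    push_cast
    field_simp
  rw [cpow_def_of_ne_zero (by exact_mod_cast (Real.exp_pos s).ne'), ofReal_exp,
    log_exp (by simpa using Real.pi_pos) (by simpa using Real.pi_pos.le), hs,
    exp_pi_div_two_mul_I]

noncomputable def pairSqNorm (κ c₁ c₂ : ℂ) (r : ℝ) : ℝ :=
  r * ‖c₁ * (r : ℂ) ^ κ + c₂ * (r : ℂ) ^ (-κ)‖ ^ 2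

theorem pairSqNorm_neg (κ c₁ c₂ : ℂ) : pairSqNorm (-κ) c₂ c₁ = pairSqNorm κ c₁ c₂ := by
  ext r
  rw [pairSqNorm, pairSqNorm, neg_neg, add_comm]

theorem pairSqNorm_zero_left (κ c : ℂ) {r : ℝ} (hr : 0 < r) :
    pairSqNorm κ 0 c r = ‖c‖ ^ 2 * r ^ (1 - 2 * κ.re) := by
  rw [pairSqNorm, zero_mul, zero_add, norm_mul, norm_cpow_eq_rpow_re_of_pos hr, neg_re, mul_pow,
    ← Real.rpow_mul_natCast hr.le, show 1 - 2 * κ.re = 1 + -κ.re * (2 : ℕ) by push_cast; ring,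
    Real.rpow_add hr, Real.rpow_one]
  ring

theorem not_integrableOn_pairSqNorm_zero_left (κ : ℂ) {c : ℂ} (hc : c ≠ 0) :
    ¬ IntegrableOn (pairSqNorm κ 0 c) (Ioi 0) := by
  have heq : EqOn (pairSqNorm κ 0 c) (fun r => ‖c‖ ^ 2 * r ^ (1 - 2 * κ.re)) (Ioi 0) :=
    fun _ hr => pairSqNorm_zero_left κ c hr
  rw [integrableOn_congr_fun heq measurableSet_Ioi, IntegrableOn,
    integrable_const_mul_iff (by simpa using hc)]
  exact not_integrableOn_Ioi_rpow _

theorem tendsto_pairSqNorm_atTop {κ : ℂ} (hκ : 0 < κ.re) {c₁ : ℂ} (hc₁ : c₁ ≠ 0) (c₂ : ℂ) :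
    Tendsto (pairSqNorm κ c₁ c₂) atTop atTop := by
  have hlower : Tendsto (fun r : ℝ => ‖c₁‖ * r ^ κ.re + -(‖c₂‖ * r ^ (-κ.re))) atTop atTop :=
    ((tendsto_rpow_atTop hκ).const_mul_atTop (norm_pos_iff.mpr hc₁)).atTop_add
      (C := -(‖c₂‖ * 0)) ((tendsto_rpow_neg_atTop hκ).const_mul _).neg
  have hnorm : Tendsto (fun r : ℝ => ‖c₁ * (r : ℂ) ^ κ + c₂ * (r : ℂ) ^ (-κ)‖) atTop atTop := by
    refine tendsto_atTop_mono' _ ?_ hlower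
    filter_upwards [eventually_gt_atTop 0] with r hr
    have := norm_sub_norm_le (c₁ * (r : ℂ) ^ κ) (-(c₂ * (r : ℂ) ^ (-κ)))
    rw [sub_neg_eq_add, norm_neg, norm_mul, norm_mul, norm_cpow_eq_rpow_re_of_pos hr,
      norm_cpow_eq_rpow_re_of_pos hr, neg_re] at this
    linarith
  exact tendsto_id.atTop_mul_atTop₀ ((tendsto_pow_atTop two_ne_zero).comp hnorm)

theorem not_integrableOn_pairSqNorm_of_re_pos {κ : ℂ} (hκ : 0 < κ.re) {c₁ c₂ : ℂ}
    (hc : ¬(c₁ = 0 ∧ c₂ = 0)) : ¬ IntegrableOn (pairSqNorm κ c₁ c₂) (Ioi 0) := by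
  by_cases hc₁ : c₁ = 0
  · subst hc₁
    exact not_integrableOn_pairSqNorm_zero_left κ fun hc₂ => hc ⟨rfl, hc₂⟩
  · exact not_integrableOn_Ioi_of_tendsto_atTop 0 (tendsto_pairSqNorm_atTop hκ hc₁ c₂)

theorem pairSqNorm_mul_of_cpow_eq_I {κ : ℂ} {a : ℝ} (ha : 0 < a) (haκ : (a : ℂ) ^ κ = I)
    (c₁ c₂ : ℂ) {r : ℝ} (hr : 0 ≤ r) :
    pairSqNorm κ c₁ c₂ (a * r) = a * (r * ‖c₁ * (r : ℂ) ^ κ - c₂ * (r : ℂ) ^ (-κ)‖ ^ 2) := by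
  have hsplit : c₁ * ((a * r : ℝ) : ℂ) ^ κ + c₂ * ((a * r : ℝ) : ℂ) ^ (-κ) =
      I * (c₁ * (r : ℂ) ^ κ - c₂ * (r : ℂ) ^ (-κ)) := by
    rw [ofReal_mul, mul_cpow_ofReal_nonneg ha.le hr, mul_cpow_ofReal_nonneg ha.le hr,
      cpow_neg (a : ℂ), haκ, inv_I]
    ring
  rw [pairSqNorm, hsplit, norm_mul, norm_I, one_mul]
  ring

theorem pairSqNorm_add_pairSqNorm_mul {κ : ℂ} (hre : κ.re = 0) {a : ℝ} (ha : 0 < a)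
    (haκ : (a : ℂ) ^ κ = I) (c₁ c₂ : ℂ) {r : ℝ} (hr : 0 < r) :
    pairSqNorm κ c₁ c₂ r + a⁻¹ * pairSqNorm κ c₁ c₂ (a * r) =
      2 * (‖c₁‖ ^ 2 + ‖c₂‖ ^ 2) * r := by
  have hu : ‖c₁ * (r : ℂ) ^ κ‖ = ‖c₁‖ := by
    rw [norm_mul, norm_ofReal_cpow_of_re_eq_zero hre hr, mul_one]
  have hv : ‖c₂ * (r : ℂ) ^ (-κ)‖ = ‖c₂‖ := by
    rw [norm_mul, norm_ofReal_cpow_of_re_eq_zero (by rw [neg_re, hre, neg_zero]) hr, mul_one]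
  have hpar := parallelogram_law_with_norm ℝ (c₁ * (r : ℂ) ^ κ) (c₂ * (r : ℂ) ^ (-κ))
  rw [hu, hv] at hpar
  rw [pairSqNorm_mul_of_cpow_eq_I ha haκ c₁ c₂ hr.le, inv_mul_cancel_left₀ ha.ne', pairSqNorm]
  linear_combination r * hpar

theorem not_integrableOn_pairSqNorm_of_re_eq_zero {κ : ℂ} (hre : κ.re = 0) (him : κ.im ≠ 0)
    {c₁ c₂ : ℂ} (hc : ¬(c₁ = 0 ∧ c₂ = 0)) : ¬ IntegrableOn (pairSqNorm κ c₁ c₂) (Ioi 0) := by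
  intro hI
  obtain ⟨a, ha, haκ⟩ := exists_ofReal_cpow_eq_I hre him
  have hIa : IntegrableOn (fun r => pairSqNorm κ c₁ c₂ (a * r)) (Ioi 0) := by
    rwa [integrableOn_Ioi_comp_mul_left_iff _ 0 ha, mul_zero]
  have hC : 0 < 2 * (‖c₁‖ ^ 2 + ‖c₂‖ ^ 2) := by
    rcases not_and_or.mp hc with h | h <;> have := norm_pos_iff.mpr h <;> positivity
  refine not_integrableOn_Ioi_of_tendsto_atTop 0 ?_ (hI.add (hIa.const_mul a⁻¹))
  refine Tendsto.congr' ?_ (tendsto_id.const_mul_atTop hC)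
  filter_upwards [eventually_gt_atTop 0] with r hr
  exact (pairSqNorm_add_pairSqNorm_mul hre ha haκ c₁ c₂ hr).symm

theorem not_integrableOn_pairSqNorm {κ : ℂ} (hκ : κ ≠ 0) {c₁ c₂ : ℂ}
    (hc : ¬(c₁ = 0 ∧ c₂ = 0)) : ¬ IntegrableOn (pairSqNorm κ c₁ c₂) (Ioi 0) := by
  rcases lt_trichotomy κ.re 0 with hneg | hzero | hpos
  · rw [← pairSqNorm_neg]
    exact not_integrableOn_pairSqNorm_of_re_pos (by rwa [neg_re, neg_pos]) fun h => hc h.symm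
  · exact not_integrableOn_pairSqNorm_of_re_eq_zero hzero (fun him => hκ (ext hzero him)) hc
  · exact not_integrableOn_pairSqNorm_of_re_pos hpos hc

theorem eqOn_norm_sq_exp_log_pairSqNorm (κ c₁ c₂ : ℂ) :
    EqOn
      (fun r : ℝ => ‖c₁ * exp ((1 / 2 + κ) * Real.log r) + c₂ * exp ((1 / 2 - κ) * Real.log r)‖ ^ 2)
      (pairSqNorm κ c₁ c₂) (Ioi 0) := by
  intro r (hr : 0 < r)
  have hr' : (r : ℂ) ≠ 0 := by exact_mod_cast hr.ne'
  have hpow (z : ℂ) : exp (z * Real.log r) = (r : ℂ) ^ z := by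
    rw [cpow_def_of_ne_zero hr', ofReal_log hr.le, mul_comm]
  have hhalf : ‖(r : ℂ) ^ (1 / 2 : ℂ)‖ ^ 2 = r := by
    rw [norm_cpow_eq_rpow_re_of_pos hr, ← Real.rpow_mul_natCast hr.le]
    norm_num
  have hfactor (x y : ℂ) : c₁ * (x * y) + c₂ * (x * y⁻¹) = x * (c₁ * y + c₂ * y⁻¹) := by ring
  dsimp only
  rw [hpow, hpow, sub_eq_add_neg, cpow_add _ _ hr', cpow_add _ _ hr', cpow_neg, hfactor, norm_mul,
    mul_pow, hhalf, pairSqNorm, cpow_neg]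

theorem stmt_11_general (κ : ℂ) (hκ : κ ≠ 0) (c₁ c₂ : ℂ)
    (hc : ¬(c₁ = 0 ∧ c₂ = 0)) :
    ¬ IntegrableOn
      (fun r : ℝ =>
        ‖c₁ * Complex.exp ((1 / 2 + κ) * Real.log r) +
          c₂ * Complex.exp ((1 / 2 - κ) * Real.log r)‖ ^ 2)
      (Set.Ioi (0 : ℝ)) := by
  rw [integrableOn_congr_fun (eqOn_norm_sq_exp_log_pairSqNorm κ c₁ c₂) measurableSet_Ioi]
  exact not_integrableOn_pairSqNorm hκ hc

theorem stmt_11 (κ : ℂ) (hκ : κ ≠ 0) (hκ' : |κ.re| < 1) (c₁ c₂ : ℂ)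
    (hc : ¬(c₁ = 0 ∧ c₂ = 0)) :
    ¬ IntegrableOn
      (fun r : ℝ =>
        ‖c₁ * Complex.exp ((1 / 2 + κ) * Real.log r) +
          c₂ * Complex.exp ((1 / 2 - κ) * Real.log r)‖ ^ 2)
      (Set.Ioi (0 : ℝ)) :=
  stmt_11_general κ hκ c₁ c₂ hc
end

section
/- Let a, b be real, A, B, C ≥ 0, and n a nonnegative integer. Then for every real α ∈ [-b², a²], |d^n/dα^n (Cos(A²α)·Cos(B²α)·Cos(-C²α))| ≤ (n!·(A+B+C)^{2n}/(2n)!)·cosh(Ab)·cosh(Bb)·cosh(Ca). -/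
/-!
The `n`-th derivative of `RCos` is `(-1)^n` times the power series `cosSeries n`, and termwise
integration against Beta-type moments gives the representation
`cosSeries (n+1) ξ = 2 / (4^(n+1) n!) ∫₀¹ (1 - s²)^n RCos (s² ξ) ds`.
As `RCos ξ` is `cos √ξ` or `cosh √(-ξ)`, it is bounded by `cosh u` for `ξ ≥ -u²`, whence
`|RCos^{(n)} ξ| ≤ n!/(2n)! · cosh u`. For a product, Leibniz' rule together with
`C(n,i) · i!/(2i)! · (n-i)!/(2n-2i)! = n!/(2n)! · C(2n,2i)` bounds the derivatives by the even
part of the binomial expansion of `(X + Y)^(2n)`, so bounds of this shape are stable under products.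
-/

open Nat Finset MeasureTheory
open scoped ContDiff

namespace RCos

noncomputable def cosCoeff (n k : ℕ) : ℝ := (k + n)! / (k ! * (2 * (k + n))!)

/-- `(-1) ^ n` times the `n`-th derivative of `RCos`, with Taylor coefficients `cosCoeff n k`. -/
noncomputable def cosSeries (n : ℕ) (ξ : ℝ) : ℝ := ∑' k : ℕ, (-ξ) ^ k * cosCoeff n k

lemma cosCoeff_nonneg (n k : ℕ) : 0 ≤ cosCoeff n k := by
  unfold cosCoeff; positivity

lemma cosCoeff_le (n k : ℕ) : cosCoeff n k ≤ 1 / k ! := by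
  unfold cosCoeff
  rw [div_le_div_iff₀ (by positivity) (by positivity), one_mul, mul_comm]
  gcongr
  omega

lemma cosCoeff_zero_left (k : ℕ) : cosCoeff 0 k = 1 / (2 * k)! := by
  unfold cosCoeff
  rw [add_zero]
  field_simp

lemma cosCoeff_zero_right (n : ℕ) : cosCoeff n 0 = n ! / (2 * n)! := by
  simp [cosCoeff]

lemma succ_mul_cosCoeff_succ (n k : ℕ) :
    ((k : ℝ) + 1) * cosCoeff n (k + 1) = cosCoeff (n + 1) k := by
  unfold cosCoeff
  rw [show k + 1 + n = k + (n + 1) by omega, factorial_succ]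
  push_cast
  field_simp

lemma summable_cosSeries_abs (n : ℕ) (ξ : ℝ) : Summable fun k => |ξ| ^ k * cosCoeff n k := by
  refine .of_nonneg_of_le (fun k => by have := cosCoeff_nonneg n k; positivity) (fun k => ?_)
    (Real.summable_pow_div_factorial |ξ|)
  rw [div_eq_mul_one_div]
  exact mul_le_mul_of_nonneg_left (cosCoeff_le n k) (pow_nonneg (abs_nonneg ξ) k)

lemma hasSum_cosSeries (n : ℕ) (ξ : ℝ) :
    HasSum (fun k => (-ξ) ^ k * cosCoeff n k) (cosSeries n ξ) :=
  (Summable.of_norm_bounded (summable_cosSeries_abs n ξ) fun k => by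
    simp [abs_of_nonneg (cosCoeff_nonneg n k)]).hasSum

lemma RCos_eq_cosSeries_zero : RCos = cosSeries 0 := by
  funext ξ
  simp only [RCos, cosSeries, cosCoeff_zero_left, mul_one_div]

lemma hasDerivAt_cosSeries (n : ℕ) (ξ : ℝ) :
    HasDerivAt (cosSeries n) (-cosSeries (n + 1) ξ) ξ := by
  set R := |ξ| + 1
  have hR : 1 ≤ R := le_add_of_nonneg_left (abs_nonneg ξ)
  have hterm (k : ℕ) (y : ℝ) : HasDerivAt (fun z : ℝ => (-z) ^ k * cosCoeff n k)
      (-((k : ℝ) * (-y) ^ (k - 1) * cosCoeff n k)) y :=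
    (((hasDerivAt_pow k (-y)).comp y (hasDerivAt_neg y)).mul_const _).congr_deriv (by ring)
  -- a summable majorant on the ball of radius `R`, via `k ≤ 2 ^ k`
  have hbound (k : ℕ) (y : ℝ) (hy : |y| ≤ R) :
      ‖-((k : ℝ) * (-y) ^ (k - 1) * cosCoeff n k)‖ ≤ (2 * R) ^ k / k ! := by
    rw [norm_neg, norm_mul, norm_mul, norm_pow, norm_neg, Real.norm_natCast, Real.norm_eq_abs,
      Real.norm_eq_abs, abs_of_nonneg (cosCoeff_nonneg n k), mul_pow, div_eq_mul_one_div]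
    have hk : (k : ℝ) ≤ 2 ^ k := by exact_mod_cast (Nat.lt_two_pow_self).le
    have hy' : |y| ^ (k - 1) ≤ R ^ k :=
      (pow_le_pow_left₀ (abs_nonneg y) hy _).trans (pow_le_pow_right₀ hR (Nat.sub_le k 1))
    gcongr
    exacts [cosCoeff_nonneg n k, cosCoeff_le n k]
  have hderiv := hasDerivAt_tsum_of_isPreconnected (Real.summable_pow_div_factorial (2 * R))
    Metric.isOpen_ball (convex_ball (0 : ℝ) R).isPreconnected (fun k y _ => hterm k y)
    (fun k y hy => hbound k y (by simpa using (mem_ball_zero_iff.mp hy).le))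
    (Metric.mem_ball_self (by positivity)) (hasSum_cosSeries n 0).summable
    (by simp [R] : ξ ∈ Metric.ball 0 R)
  have hsum : HasSum (fun k : ℕ => -((k : ℝ) * (-ξ) ^ (k - 1) * cosCoeff n k))
      (-cosSeries (n + 1) ξ) := by
    refine ((hasSum_nat_add_iff' 1).mp ?_).neg
    simpa [← succ_mul_cosCoeff_succ, mul_assoc, mul_left_comm] using hasSum_cosSeries (n + 1) ξ
  exact hsum.tsum_eq ▸ hderiv

lemma differentiable_cosSeries (n : ℕ) : Differentiable ℝ (cosSeries n) :=
  fun ξ => (hasDerivAt_cosSeries n ξ).differentiableAt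

lemma deriv_cosSeries (n : ℕ) : deriv (cosSeries n) = fun ξ => -cosSeries (n + 1) ξ :=
  funext fun ξ => (hasDerivAt_cosSeries n ξ).deriv

lemma iteratedDeriv_cosSeries (m n : ℕ) :
    iteratedDeriv m (cosSeries n) = fun ξ => (-1) ^ m * cosSeries (n + m) ξ := by
  induction m with
  | zero => simp
  | succ m ih =>
    funext ξ
    rw [iteratedDeriv_succ, ih, deriv_const_mul_field', deriv_cosSeries, ← add_assoc]
    ring

lemma contDiff_cosSeries (n : ℕ) : ContDiff ℝ ∞ (cosSeries n) :=
  contDiff_of_differentiable_iteratedDeriv fun m _ => by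
    rw [iteratedDeriv_cosSeries]
    exact (differentiable_cosSeries _).const_mul _

lemma iteratedDeriv_RCos_comp_mul (c : ℝ) (m : ℕ) (x : ℝ) :
    iteratedDeriv m (fun y => RCos (c * y)) x = (-c) ^ m * cosSeries m (c * x) := by
  rw [RCos_eq_cosSeries_zero, iteratedDeriv_comp_const_mul
    ((contDiff_cosSeries 0).of_le (by exact_mod_cast le_top)), iteratedDeriv_cosSeries, neg_pow]
  ring_nf

lemma cosSeries_zero_of_nonneg {ξ : ℝ} (h : 0 ≤ ξ) : cosSeries 0 ξ = Real.cos √ξ := by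
  rw [Real.cos_eq_tsum]
  refine tsum_congr fun k => ?_
  rw [cosCoeff_zero_left, pow_mul, Real.sq_sqrt h, neg_pow]
  ring

lemma cosSeries_zero_of_nonpos {ξ : ℝ} (h : ξ ≤ 0) : cosSeries 0 ξ = Real.cosh √(-ξ) := by
  rw [Real.cosh_eq_tsum]
  refine tsum_congr fun k => ?_
  rw [cosCoeff_zero_left, pow_mul, Real.sq_sqrt (neg_nonneg.mpr h)]
  ring

lemma abs_cosSeries_zero_le {ξ u : ℝ} (h : -u ^ 2 ≤ ξ) :
    |cosSeries 0 ξ| ≤ Real.cosh u := by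
  rcases le_total 0 ξ with hξ | hξ
  · rw [cosSeries_zero_of_nonneg hξ]
    exact (Real.abs_cos_le_one _).trans (Real.one_le_cosh u)
  · rw [cosSeries_zero_of_nonpos hξ, abs_of_pos (Real.cosh_pos _), Real.cosh_le_cosh,
      abs_of_nonneg (Real.sqrt_nonneg _), ← Real.sqrt_sq_eq_abs]
    exact Real.sqrt_le_sqrt (by linarith)

lemma integral_pow_mul_one_sub_sq_pow_succ (k n : ℕ) :
    ∫ s in (0 : ℝ)..1, s ^ (2 * k) * (1 - s ^ 2) ^ (n + 1) =
      (2 * (n + 1) : ℝ) / (2 * k + 1) *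
        ∫ s in (0 : ℝ)..1, s ^ (2 * (k + 1)) * (1 - s ^ 2) ^ n := by
  -- integration by parts: `s ^ (2k+1) * (1 - s²) ^ (n+1)` vanishes at both ends
  have hderiv (s : ℝ) : HasDerivAt (fun s : ℝ => s ^ (2 * k + 1) * (1 - s ^ 2) ^ (n + 1))
      ((2 * k + 1 : ℝ) * (s ^ (2 * k) * (1 - s ^ 2) ^ (n + 1)) -
        2 * (n + 1 : ℝ) * (s ^ (2 * (k + 1)) * (1 - s ^ 2) ^ n)) s := by
    have h : HasDerivAt (fun s : ℝ => s ^ (2 * k + 1) * (1 - s ^ 2) ^ (n + 1)) _ s :=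
      (hasDerivAt_pow (2 * k + 1) s).mul (((hasDerivAt_pow 2 s).const_sub 1).pow (n + 1))
    convert h using 1
    norm_num
    ring
  have hI := intervalIntegral.integral_eq_sub_of_hasDerivAt (fun s _ => hderiv s)
    ((by fun_prop : Continuous _).intervalIntegrable 0 1)
  rw [intervalIntegral.integral_sub ((by fun_prop : Continuous _).intervalIntegrable 0 1)
    ((by fun_prop : Continuous _).intervalIntegrable 0 1), intervalIntegral.integral_const_mul,
    intervalIntegral.integral_const_mul] at hI
  norm_num at hI
  rw [div_mul_eq_mul_div, eq_div_iff (by positivity)]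
  linear_combination hI

-- the Beta integral `B(k + 1/2, n + 1) / 2`, written through `cosCoeff`
lemma integral_pow_mul_one_sub_sq_pow (n k : ℕ) :
    ∫ s in (0 : ℝ)..1, s ^ (2 * k) * (1 - s ^ 2) ^ n =
      4 ^ (n + 1) * n ! / 2 * (2 * k)! * cosCoeff (n + 1) k := by
  induction n generalizing k with
  | zero =>
    simp only [pow_zero, mul_one, integral_pow, cosCoeff]
    rw [show 2 * (k + (0 + 1)) = 2 * k + 1 + 1 by ring, factorial_succ, factorial_succ,
      show k + (0 + 1) = k + 1 by ring, factorial_succ]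
    push_cast
    field_simp
    ring
  | succ n ih =>
    rw [integral_pow_mul_one_sub_sq_pow_succ, ih, ← succ_mul_cosCoeff_succ (n + 1) k,
      show 2 * (k + 1) = 2 * k + 1 + 1 by ring, factorial_succ, factorial_succ, factorial_succ n]
    push_cast
    field_simp
    ring

lemma cosSeries_succ_eq_integral (n : ℕ) (ξ : ℝ) :
    cosSeries (n + 1) ξ = (2 : ℝ) / (4 ^ (n + 1) * n !) *
      ∫ s in (0 : ℝ)..1, (1 - s ^ 2) ^ n * cosSeries 0 (s ^ 2 * ξ) := by
  have hbound (k : ℕ) (s : ℝ) (hs : s ∈ Set.uIoc (0 : ℝ) 1) :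
      ‖(1 - s ^ 2) ^ n * ((-(s ^ 2 * ξ)) ^ k * cosCoeff 0 k)‖ ≤ |ξ| ^ k * cosCoeff 0 k := by
    rw [Set.uIoc_of_le zero_le_one] at hs
    obtain ⟨hs0, hs1⟩ := hs
    have h1 : |1 - s ^ 2| ^ n ≤ 1 :=
      pow_le_one₀ (abs_nonneg _) (abs_le.mpr ⟨by nlinarith, by nlinarith⟩)
    have h2 : |s ^ 2 * ξ| ≤ |ξ| := by
      rw [abs_mul, abs_of_nonneg (sq_nonneg s)]
      exact mul_le_of_le_one_left (abs_nonneg ξ) (by nlinarith)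
    rw [norm_mul, norm_mul, norm_pow, norm_pow, norm_neg, Real.norm_eq_abs, Real.norm_eq_abs,
      Real.norm_eq_abs, abs_of_nonneg (cosCoeff_nonneg 0 k)]
    have := cosCoeff_nonneg 0 k
    calc |1 - s ^ 2| ^ n * (|s ^ 2 * ξ| ^ k * cosCoeff 0 k)
        ≤ 1 * (|ξ| ^ k * cosCoeff 0 k) := by gcongr
      _ = |ξ| ^ k * cosCoeff 0 k := one_mul _
  have hsum := intervalIntegral.hasSum_integral_of_dominated_convergence (μ := volume)
    (fun (k : ℕ) (_ : ℝ) => |ξ| ^ k * cosCoeff 0 k)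
    (fun k => (by fun_prop : Continuous fun s : ℝ =>
      (1 - s ^ 2) ^ n * ((-(s ^ 2 * ξ)) ^ k * cosCoeff 0 k)).aestronglyMeasurable)
    (fun k => ae_of_all _ (hbound k)) (ae_of_all _ fun _ _ => summable_cosSeries_abs 0 ξ)
    intervalIntegrable_const
    (ae_of_all _ fun s _ => (hasSum_cosSeries 0 (s ^ 2 * ξ)).mul_left _)
  have hterm (k : ℕ) :
      ∫ s in (0 : ℝ)..1, (1 - s ^ 2) ^ n * ((-(s ^ 2 * ξ)) ^ k * cosCoeff 0 k) =
        4 ^ (n + 1) * n ! / 2 * ((-ξ) ^ k * cosCoeff (n + 1) k) := by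
    have hcoeff : cosCoeff 0 k * (2 * k)! = 1 := by
      rw [cosCoeff_zero_left]
      field_simp
    calc _ = (-ξ) ^ k * cosCoeff 0 k * ∫ s in (0 : ℝ)..1, s ^ (2 * k) * (1 - s ^ 2) ^ n := by
          rw [← intervalIntegral.integral_const_mul]
          congr 1 with s
          ring
      _ = _ := by
          rw [integral_pow_mul_one_sub_sq_pow]
          linear_combination (4 ^ (n + 1) * n ! / 2 * (-ξ) ^ k * cosCoeff (n + 1) k) * hcoeff
  rw [hsum.unique (by simpa only [hterm] using (hasSum_cosSeries (n + 1) ξ).mul_left _)]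
  field_simp

lemma abs_cosSeries_le (n : ℕ) {ξ u : ℝ} (h : -u ^ 2 ≤ ξ) :
    |cosSeries n ξ| ≤ n ! / (2 * n)! * Real.cosh u := by
  cases n with
  | zero => simpa using abs_cosSeries_zero_le h
  | succ n =>
    have hbound : |∫ s in (0 : ℝ)..1, (1 - s ^ 2) ^ n * cosSeries 0 (s ^ 2 * ξ)| ≤
        ∫ s in (0 : ℝ)..1, s ^ (2 * 0) * (1 - s ^ 2) ^ n * Real.cosh u := by
      have hpt : ∀ s ∈ Set.Ioc (0 : ℝ) 1, ‖(1 - s ^ 2) ^ n * cosSeries 0 (s ^ 2 * ξ)‖ ≤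
          s ^ (2 * 0) * (1 - s ^ 2) ^ n * Real.cosh u := by
        rintro s ⟨hs0, hs1⟩
        have h1 : 0 ≤ 1 - s ^ 2 := by nlinarith
        have h2 : -u ^ 2 ≤ s ^ 2 * ξ := by nlinarith [mul_nonneg h1 (sq_nonneg u)]
        rw [norm_mul, Real.norm_eq_abs, Real.norm_eq_abs, abs_pow, abs_of_nonneg h1, pow_zero,
          one_mul]
        gcongr
        exact abs_cosSeries_zero_le h2
      exact intervalIntegral.norm_integral_le_of_norm_le zero_le_one
        (ae_of_all _ hpt) ((by fun_prop : Continuous fun s : ℝ =>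
          s ^ (2 * 0) * (1 - s ^ 2) ^ n * Real.cosh u).intervalIntegrable 0 1)
    rw [cosSeries_succ_eq_integral, abs_mul, abs_of_nonneg (by positivity)]
    calc _ ≤ (2 : ℝ) / (4 ^ (n + 1) * n !) *
          ∫ s in (0 : ℝ)..1, s ^ (2 * 0) * (1 - s ^ 2) ^ n * Real.cosh u := by gcongr
      _ = _ := by
          rw [intervalIntegral.integral_mul_const, integral_pow_mul_one_sub_sq_pow,
            cosCoeff_zero_right, Nat.mul_zero, factorial_zero, cast_one]
          field_simp

lemma contDiff_RCos_comp_mul (c : ℝ) : ContDiff ℝ ∞ fun y => RCos (c * y) := by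
  rw [RCos_eq_cosSeries_zero]
  exact (contDiff_cosSeries 0).comp (contDiff_const.mul contDiff_id)

lemma abs_iteratedDeriv_RCos_comp_mul_le {c X u x : ℝ} (hc : |c| = X ^ 2)
    (hcx : -u ^ 2 ≤ c * x) (m : ℕ) :
    |iteratedDeriv m (fun y => RCos (c * y)) x| ≤
      m ! / (2 * m)! * X ^ (2 * m) * Real.cosh u := by
  rw [iteratedDeriv_RCos_comp_mul, abs_mul, abs_pow, abs_neg, hc]
  calc (X ^ 2) ^ m * |cosSeries m (c * x)|
      ≤ (X ^ 2) ^ m * (m ! / (2 * m)! * Real.cosh u) := by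
        gcongr
        exact abs_cosSeries_le m hcx
    _ = _ := by ring

lemma sum_choose_two_mul_mul_pow_le {x y : ℝ} (hx : 0 ≤ x) (hy : 0 ≤ y) (n : ℕ) :
    ∑ i ∈ range (n + 1), ((2 * n).choose (2 * i) : ℝ) * x ^ (2 * i) * y ^ (2 * (n - i)) ≤
      (x + y) ^ (2 * n) := by
  calc _ = ∑ p ∈ (range (n + 1)).image (2 * ·),
        x ^ p * y ^ (2 * n - p) * ((2 * n).choose p : ℝ) := by
        rw [sum_image fun a _ b _ h => by omega]
        refine sum_congr rfl fun i hi => ?_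
        rw [show 2 * n - 2 * i = 2 * (n - i) by omega]
        ring
    _ ≤ ∑ p ∈ range (2 * n + 1), x ^ p * y ^ (2 * n - p) * ((2 * n).choose p : ℝ) := by
        refine sum_le_sum_of_subset_of_nonneg (fun p hp => ?_) fun _ _ _ => by positivity
        simp only [mem_image, mem_range] at hp ⊢
        omega
    _ = _ := (add_pow x y (2 * n)).symm

lemma choose_mul_div_factorial_two_mul {n i : ℕ} (h : i ≤ n) :
    (n.choose i : ℝ) * (i ! / (2 * i)!) * ((n - i)! / (2 * (n - i))!) =
      n ! / (2 * n)! * (2 * n).choose (2 * i) := by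
  rw [cast_choose ℝ h, cast_choose ℝ (by omega : 2 * i ≤ 2 * n),
    show 2 * n - 2 * i = 2 * (n - i) by omega]
  field_simp

lemma sum_choose_mul_div_factorial_two_mul_le {X Y : ℝ} (hX : 0 ≤ X) (hY : 0 ≤ Y) (n : ℕ) :
    ∑ i ∈ range (n + 1), (n.choose i : ℝ) * (i ! / (2 * i)! * X ^ (2 * i)) *
      ((n - i)! / (2 * (n - i))! * Y ^ (2 * (n - i))) ≤ n ! / (2 * n)! * (X + Y) ^ (2 * n) := by
  calc _ = n ! / (2 * n)! * ∑ i ∈ range (n + 1),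
        ((2 * n).choose (2 * i) : ℝ) * X ^ (2 * i) * Y ^ (2 * (n - i)) := by
        rw [mul_sum]
        refine sum_congr rfl fun i hi => ?_
        linear_combination (X ^ (2 * i) * Y ^ (2 * (n - i))) *
          choose_mul_div_factorial_two_mul (mem_range_succ_iff.mp hi)
    _ ≤ _ := by
        gcongr
        exact sum_choose_two_mul_mul_pow_le hX hY n

lemma abs_iteratedDeriv_mul_le {f g : ℝ → ℝ} {x X Y M N : ℝ} {n : ℕ}
    (hf : ContDiffAt ℝ n f x) (hg : ContDiffAt ℝ n g x) (hX : 0 ≤ X) (hY : 0 ≤ Y)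
    (hfx : ∀ m ≤ n, |iteratedDeriv m f x| ≤ m ! / (2 * m)! * X ^ (2 * m) * M)
    (hgx : ∀ m ≤ n, |iteratedDeriv m g x| ≤ m ! / (2 * m)! * Y ^ (2 * m) * N) :
    |iteratedDeriv n (fun y => f y * g y) x| ≤ n ! / (2 * n)! * (X + Y) ^ (2 * n) * (M * N) := by
  have hM : 0 ≤ M := by simpa using (abs_nonneg _).trans (hfx 0 (zero_le n))
  have hN : 0 ≤ N := by simpa using (abs_nonneg _).trans (hgx 0 (zero_le n))
  rw [iteratedDeriv_fun_mul hf hg]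
  calc _ ≤ ∑ i ∈ range (n + 1),
        |(n.choose i : ℝ) * iteratedDeriv i f x * iteratedDeriv (n - i) g x| :=
        abs_sum_le_sum_abs _ _
    _ ≤ ∑ i ∈ range (n + 1), (n.choose i : ℝ) * (i ! / (2 * i)! * X ^ (2 * i) * M) *
          ((n - i)! / (2 * (n - i))! * Y ^ (2 * (n - i)) * N) := by
        gcongr with i hi
        rw [abs_mul, abs_mul, Nat.abs_cast]
        have hi : i ≤ n := mem_range_succ_iff.mp hi
        gcongr
        exacts [hfx i hi, hgx (n - i) (Nat.sub_le n i)]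
    _ = (∑ i ∈ range (n + 1), (n.choose i : ℝ) * (i ! / (2 * i)! * X ^ (2 * i)) *
          ((n - i)! / (2 * (n - i))! * Y ^ (2 * (n - i)))) * (M * N) := by
        rw [sum_mul]
        refine sum_congr rfl fun i _ => by ring
    _ ≤ _ := by
        gcongr
        exact sum_choose_mul_div_factorial_two_mul_le hX hY n

end RCos

open RCos in
theorem stmt_18 (a b A B C : ℝ) (hA : 0 ≤ A) (hB : 0 ≤ B) (hC : 0 ≤ C) (n : ℕ)
    (α : ℝ) (hα : α ∈ Set.Icc (-b ^ 2) (a ^ 2)) :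
    |iteratedDeriv n
        (fun x : ℝ => RCos (A ^ 2 * x) * RCos (B ^ 2 * x) * RCos (-(C ^ 2) * x)) α| ≤
      (Nat.factorial n * (A + B + C) ^ (2 * n) / Nat.factorial (2 * n)) *
        Real.cosh (A * b) * Real.cosh (B * b) * Real.cosh (C * a) := by
  obtain ⟨hαb, hαa⟩ := hα
  have hsmooth (c : ℝ) (m : ℕ) : ContDiffAt ℝ m (fun y => RCos (c * y)) α :=
    ((contDiff_RCos_comp_mul c).of_le (by exact_mod_cast le_top)).contDiffAt
  have hAB (m : ℕ) := abs_iteratedDeriv_mul_le (hsmooth _ m) (hsmooth _ m) hA hB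
    (fun k _ => abs_iteratedDeriv_RCos_comp_mul_le (abs_sq A) (u := A * b)
      (by nlinarith [mul_le_mul_of_nonneg_left hαb (sq_nonneg A)]) k)
    (fun k _ => abs_iteratedDeriv_RCos_comp_mul_le (abs_sq B) (u := B * b)
      (by nlinarith [mul_le_mul_of_nonneg_left hαb (sq_nonneg B)]) k)
  have hABC := abs_iteratedDeriv_mul_le ((hsmooth _ n).mul (hsmooth _ n)) (hsmooth _ n)
    (add_nonneg hA hB) hC (fun m _ => hAB m)
    (fun k _ => abs_iteratedDeriv_RCos_comp_mul_le (by rw [abs_neg, abs_sq]) (u := C * a)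
      (by nlinarith [mul_le_mul_of_nonneg_left hαa (sq_nonneg C)]) k)
  exact hABC.trans_eq (by ring)
end
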